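/- For every n ≥ 1 and all formulas φ, χ_1, …, χ_n of L(∇,•), the formula ∘((χ_1 ∧ ⋯ ∧ χ_n) → φ) ∧ ∘(¬φ→χ_1) ∧ ⋯ ∧ ∘(¬φ→χ_n) → ∘φ is derivable in the proof system K^{∇•}. -/
import Mathlib


inductive Form : Type
  | atom : Nat → Form
  | neg : Form → Form
  | and : Form → Form → Form
  | nabla : Form → Form
  | bull : Form → Form

namespace Form
def imp (φ ψ : Form) : Form := neg (and φ (neg ψ))
def orf (φ ψ : Form) : Form := neg (and (neg φ) (neg ψ))
def ifff (φ ψ : Form) : Form := and (imp φ ψ) (imp ψ φ)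
def delta (φ : Form) : Form := neg (nabla φ)
def circ (φ : Form) : Form := neg (bull φ)
end Form

structure Model (W : Type) where
  R : W → W → Prop
  V : Nat → W → Prop

def sat {W : Type} (M : Model W) : W → Form → Prop
  | s, .atom n => M.V n s
  | s, .neg φ => ¬ sat M s φ
  | s, .and φ ψ => sat M s φ ∧ sat M s ψ
  | s, .nabla φ => ∃ t u, M.R s t ∧ M.R s u ∧ sat M t φ ∧ ¬ sat M u φ
  | s, .bull φ => sat M s φ ∧ ∃ t, M.R s t ∧ ¬ sat M t φ

/-- Boolean evaluation treating atoms, `∇φ` and `•φ` as propositional atoms;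
used to express "instance of a propositional tautology". -/
def evalT (v : Form → Bool) : Form → Bool
  | .neg φ => !(evalT v φ)
  | .and φ ψ => evalT v φ && evalT v ψ
  | φ => v φ

/-- `φ` is an instance of a propositional tautology. -/
def Taut (φ : Form) : Prop := ∀ v : Form → Bool, evalT v φ = true

/-- Derivability in the minimal system `K^{∇•}`. -/
inductive Prov : Form → Prop
  | a0 : ∀ φ, Taut φ → Prov φ
  | a1 : ∀ φ, Prov (Form.imp (.bull φ) φ)
  | a2 : ∀ φ, Prov (Form.ifff (.nabla φ) (.nabla (.neg φ)))
  | a3 : ∀ φ ψ, Prov (Form.imp (.and (.bull (Form.imp ψ φ)) φ) (.bull φ))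
  | a4 : ∀ φ ψ, Prov (Form.imp (.nabla (.and φ ψ)) (Form.orf (.nabla φ) (.nabla ψ)))
  | a5 : ∀ φ ψ, Prov (Form.imp (.bull (.and φ ψ)) (Form.orf (.bull φ) (.bull ψ)))
  | a6 : ∀ φ, Prov (Form.imp (.nabla φ) (Form.orf (.bull φ) (.bull (.neg φ))))
  | a7 : ∀ φ ψ χ, Prov (Form.imp (.and (.bull (Form.imp φ ψ)) (.bull (Form.imp (.neg φ) χ))) (.nabla φ))
  | r1 : ∀ φ, Prov φ → Prov (Form.delta φ)
  | r2 : ∀ φ, Prov φ → Prov (Form.circ φ)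
  | r3 : ∀ φ ψ, Prov (Form.ifff φ ψ) → Prov (Form.ifff (Form.delta φ) (Form.delta ψ))
  | r4 : ∀ φ ψ, Prov (Form.ifff φ ψ) → Prov (Form.ifff (Form.circ φ) (Form.circ ψ))
  | mp : ∀ φ ψ, Prov (Form.imp φ ψ) → Prov φ → Prov ψ

/-- `bigAnd [χ₁, …, χₙ] = χ₁ ∧ ⋯ ∧ χₙ` (for nonempty lists). -/
def bigAnd : List Form → Form
  | [] => Form.neg (Form.and (Form.atom 0) (Form.neg (Form.atom 0)))
  | [φ] => φ
  | φ :: ψ :: rest => Form.and φ (bigAnd (ψ :: rest))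


-- ===== auxiliary lemmas =====

lemma evalT_neg (v : Form → Bool) (φ : Form) : evalT v (.neg φ) = !(evalT v φ) := rfl
lemma evalT_and (v : Form → Bool) (φ ψ : Form) :
    evalT v (.and φ ψ) = (evalT v φ && evalT v ψ) := rfl
lemma evalT_imp (v : Form → Bool) (φ ψ : Form) :
    evalT v (Form.imp φ ψ) = (!(evalT v φ && !(evalT v ψ))) := rfl
lemma evalT_ifff (v : Form → Bool) (φ ψ : Form) :
    evalT v (Form.ifff φ ψ) =
      ((!(evalT v φ && !(evalT v ψ))) && (!(evalT v ψ && !(evalT v φ)))) := rfl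
lemma evalT_orf (v : Form → Bool) (φ ψ : Form) :
    evalT v (Form.orf φ ψ) = (!((!evalT v φ) && (!evalT v ψ))) := rfl

lemma evalT_bigAnd (v : Form → Bool) :
    ∀ (l : List Form), l ≠ [] → evalT v (bigAnd l) = l.all (evalT v)
  | [], h => absurd rfl h
  | [x], _ => by simp [bigAnd]
  | x :: y :: l, _ => by
      rw [bigAnd, evalT_and, evalT_bigAnd v (y :: l) (by simp)]
      simp

/-- The glue tautology `(α ↔ β) → ((γ → β) → (γ → α))`. -/
lemma prov_glue (α β γ : Form) (h1 : Prov (Form.ifff α β)) (h2 : Prov (Form.imp γ β)) :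
    Prov (Form.imp γ α) := by
  have t : Taut (Form.imp (Form.ifff α β) (Form.imp (Form.imp γ β) (Form.imp γ α))) := by
    intro v
    rw [evalT_imp, evalT_imp, evalT_imp, evalT_imp, evalT_ifff]
    cases evalT v α <;> cases evalT v β <;> cases evalT v γ <;> rfl
  exact Prov.mp _ _ (Prov.mp _ _ (Prov.a0 _ t) h1) h2

/-- Contraposition: from `a → ¬b` infer `b → ¬a`. -/
lemma prov_contra (a b : Form) (h : Prov (Form.imp a (.neg b))) :
    Prov (Form.imp b (.neg a)) := by
  have t : Taut (Form.imp (Form.imp a (.neg b)) (Form.imp b (.neg a))) := by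
    intro v
    rw [evalT_imp, evalT_imp, evalT_imp, evalT_neg, evalT_neg]
    cases evalT v a <;> cases evalT v b <;> rfl
  exact Prov.mp _ _ (Prov.a0 _ t) h

/-- Case glue: from `p → (q ∨ r)` and `r → ¬t` infer `p → ¬(¬q ∧ t)`. -/
lemma prov_case (p q r t : Form) (h1 : Prov (Form.imp p (Form.orf q r)))
    (h2 : Prov (Form.imp r (.neg t))) :
    Prov (Form.imp p (.neg (.and (.neg q) t))) := by
  have tt : Taut (Form.imp (Form.imp p (Form.orf q r))
      (Form.imp (Form.imp r (.neg t)) (Form.imp p (.neg (.and (.neg q) t))))) := by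
    intro v
    rw [evalT_imp, evalT_imp, evalT_imp, evalT_imp, evalT_imp, evalT_orf,
      evalT_neg, evalT_neg, evalT_and, evalT_neg]
    cases evalT v p <;> cases evalT v q <;> cases evalT v r <;> cases evalT v t <;> rfl
  exact Prov.mp _ _ (Prov.mp _ _ (Prov.a0 _ tt) h1) h2

/-- Iterated A5: `•(A ∧ ⋀l) → ¬(∘A ∧ ⋀(∘l))`. -/
lemma prov_bigA5 : ∀ (l : List Form) (A : Form), l ≠ [] →
    Prov (Form.imp (.bull (.and A (bigAnd l)))
      (.neg (.and (Form.circ A) (bigAnd (l.map Form.circ)))))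
  | [], _, h => absurd rfl h
  | [x], A, _ => Prov.a5 A x
  | x :: y :: l, A, _ => by
      have ih := prov_bigA5 (y :: l) x (by simp)
      have h5 := Prov.a5 A (bigAnd (x :: y :: l))
      have hb : bigAnd (x :: y :: l) = Form.and x (bigAnd (y :: l)) := rfl
      rw [hb] at h5 ⊢
      have hc : bigAnd ((x :: y :: l).map Form.circ)
          = Form.and (Form.circ x) (bigAnd ((y :: l).map Form.circ)) := rfl
      rw [hc]
      exact prov_case _ _ _ _ h5 ih

/-- The central propositional tautology: `φ ↔ ((⋀χs → φ) ∧ ⋀(¬φ → χᵢ))`. -/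
lemma all_congr' {α : Type} (l : List α) (f g : α → Bool) (h : ∀ a, f a = g a) :
    l.all f = l.all g := by
  have : f = g := funext h
  rw [this]

lemma taut_main (φ : Form) (χs : List Form) (h : χs ≠ []) :
    Taut (Form.ifff φ (.and (Form.imp (bigAnd χs) φ)
      (bigAnd (χs.map (fun c => Form.imp (.neg φ) c))))) := by
  intro v
  have hm : χs.map (fun c => Form.imp (.neg φ) c) ≠ [] := by
    simpa using h
  rw [evalT_ifff, evalT_and, evalT_imp, evalT_bigAnd v χs h,
    evalT_bigAnd v _ hm, List.all_map]
  have hall : χs.all ((evalT v) ∘ fun c => Form.imp (.neg φ) c)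
      = χs.all (fun c => !((!evalT v φ) && !(evalT v c))) := by
    exact all_congr' _ _ _ fun c => rfl
  rw [hall]
  cases hφ : evalT v φ
  · have h2 : χs.all (fun c => !((!false) && !(evalT v c))) = χs.all (evalT v) := by
      exact all_congr' _ _ _ fun c => by cases evalT v c <;> rfl
    rw [h2]
    cases χs.all (evalT v) <;> rfl
  · have h2 : χs.all (fun c => !((!true) && !(evalT v c))) = true := by
      apply List.all_eq_true.2; intro c _; rfl
    rw [h2]
    cases χs.all (evalT v) <;> rfl

theorem stmt11 (n : ℕ) (hn : 1 ≤ n) (φ : Form) (χ : Fin n → Form) :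
    Prov (Form.imp
      (.and (Form.circ (Form.imp (bigAnd (List.ofFn χ)) φ))
        (bigAnd ((List.ofFn χ).map (fun c => Form.circ (Form.imp (.neg φ) c)))))
      (Form.circ φ)) := by
  set χs := List.ofFn χ with hχs
  have hne : χs ≠ [] := by
    simp [hχs, List.ofFn_eq_nil_iff]
    omega
  set l := χs.map (fun c => Form.imp (.neg φ) c) with hl
  have hlne : l ≠ [] := by simpa [hl] using hne
  set A := Form.imp (bigAnd χs) φ with hA
  set Ψ := Form.and A (bigAnd l) with hΨ
  -- φ ↔ Ψ
  have h1 : Prov (Form.ifff φ Ψ) := Prov.a0 _ (taut_main φ χs hne)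
  have h2 : Prov (Form.ifff (Form.circ φ) (Form.circ Ψ)) := Prov.r4 _ _ h1
  have h3 := prov_bigA5 l A hlne
  have h4 : Prov (Form.imp (.and (Form.circ A) (bigAnd (l.map Form.circ))) (Form.circ Ψ)) :=
    prov_contra _ _ h3
  have h5 := prov_glue _ _ _ h2 h4
  have hmm : l.map Form.circ = χs.map (fun c => Form.circ (Form.imp (.neg φ) c)) := by
    rw [hl, List.map_map]
    rfl
  rw [hmm] at h5
  exact h5
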